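/- Let A be a complex unital Banach algebra, let a, δa ∈ A, let p, q ∈ A be idempotents, and suppose b ∈ A satisfies a·b·a = a, b·a·b = b, R_r(b) = R_r(p) and K_r(b) = R_r(q) (i.e., b = a^{(l)}_{p,q}). Put ā = a + δa. Assume that either (i) δ(K_r(ā), K_r(a)) < ‖b·a‖⁻¹, δ(R_r(ā), R_r(a)) < ‖1 − a·b‖⁻¹, and {ā·y : y ∈ R_r(p)} = K_r(q); or (ii) 1 + b·δa is invertible and δ(R_r(ā), R_r(a)) < ‖1 − a·b‖⁻¹. Then the element w = b·(1 + δa·b)⁻¹ satisfies ā·w·ā = ā, w·ā·w = w, R_r(w) = R_r(p) and K_r(w) = R_r(q); that is, ā^{(l)}_{p,q} exists and equals b·(1 + δa·b)⁻¹. -/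
import Mathlib

lemma aux_gap_zero {A : Type*} [NormedRing A] (x : A) (S : Set A) (hS : S.Nonempty)
    (k c : ℝ) (hck : c * k < 1)
    (hd : Metric.infDist x S ≤ c * ‖x‖)
    (hb : ∀ z ∈ S, ‖x‖ ≤ k * dist x z) : x = 0 := by
  by_contra hx
  have hxn : 0 < ‖x‖ := norm_pos_iff.mpr hx
  rcases le_or_gt k 0 with hk | hk
  · obtain ⟨z, hz⟩ := hS
    have h1 := hb z hz
    have h2 : (0:ℝ) ≤ dist x z := dist_nonneg
    nlinarith
  · have hlt : Metric.infDist x S < ‖x‖ / k := by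
      have : c * ‖x‖ < ‖x‖ / k := by
        rw [lt_div_iff₀ hk]; nlinarith
      linarith
    obtain ⟨y, hy, hdy⟩ := (Metric.infDist_lt_iff hS).mp hlt
    have := hb y hy
    rw [lt_div_iff₀ hk, mul_comm] at hdy
    linarith

lemma aux_unit_swap {A : Type*} [Ring A] {x y : A} (h : IsUnit (1 + x * y)) :
    IsUnit (1 + y * x) := by
  obtain ⟨u, hu⟩ := h
  have h1 : (1 + x*y) * ↑u⁻¹ = 1 := by rw [← hu]; exact u.mul_inv
  have h2 : (↑u⁻¹ : A) * (1 + x*y) = 1 := by rw [← hu]; exact u.inv_mul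
  refine ⟨⟨1 + y*x, 1 - y * ↑u⁻¹ * x, ?_, ?_⟩, rfl⟩
  · have : (1 + y*x) * (1 - y * ↑u⁻¹ * x) = 1 + y * ((1 - (1+x*y) * ↑u⁻¹) * x) := by
      noncomm_ring
    rw [this, h1]; noncomm_ring
  · have : (1 - y * ↑u⁻¹ * x) * (1 + y*x) = 1 + y * ((1 - ↑u⁻¹ * (1+x*y)) * x) := by
      noncomm_ring
    rw [this, h2]; noncomm_ring

/-- Right range `R_r(a) = {a·x : x ∈ A}`. -/
def Rr {A : Type*} [Ring A] (a : A) : Set A := {y | ∃ x, y = a * x}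

/-- Right kernel `K_r(a) = {x ∈ A : a·x = 0}`. -/
def Kr {A : Type*} [Ring A] (a : A) : Set A := {x | a * x = 0}

/-- Left range `R_l(a) = {x·a : x ∈ A}`. -/
def Rl {A : Type*} [Ring A] (a : A) : Set A := {y | ∃ x, y = x * a}

/-- Left kernel `K_l(a) = {x ∈ A : x·a = 0}`. -/
def Kl {A : Type*} [Ring A] (a : A) : Set A := {x | x * a = 0}

theorem stmt9 {A : Type*} [NormedRing A] [NormedAlgebra ℂ A] [CompleteSpace A]
    (a δa p q b : A) (hp : p * p = p) (hq : q * q = q)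
    (hb0 : a * b * a = a) (hb1 : b * a * b = b) (hb2 : Rr b = Rr p) (hb3 : Kr b = Rr q)
    (hyp :
      ((∃ c : ℝ, 0 ≤ c ∧ c * ‖b * a‖ < 1 ∧
          ∀ x ∈ Kr (a + δa), Metric.infDist x (Kr a) ≤ c * ‖x‖) ∧
        (∃ c : ℝ, 0 ≤ c ∧ c * ‖1 - a * b‖ < 1 ∧
          ∀ x ∈ Rr (a + δa), Metric.infDist x (Rr a) ≤ c * ‖x‖) ∧
        (fun y => (a + δa) * y) '' Rr p = Kr q) ∨
      (IsUnit (1 + b * δa) ∧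
        (∃ c : ℝ, 0 ≤ c ∧ c * ‖1 - a * b‖ < 1 ∧
          ∀ x ∈ Rr (a + δa), Metric.infDist x (Rr a) ≤ c * ‖x‖))) :
    (a + δa) * (b * Ring.inverse (1 + δa * b)) * (a + δa) = a + δa ∧
    (b * Ring.inverse (1 + δa * b)) * (a + δa) * (b * Ring.inverse (1 + δa * b))
      = b * Ring.inverse (1 + δa * b) ∧
    Rr (b * Ring.inverse (1 + δa * b)) = Rr p ∧
    Kr (b * Ring.inverse (1 + δa * b)) = Rr q := by
  -- basic consequences of the hypotheses
  have hbq : b * q = 0 := by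
    have : q ∈ Rr q := ⟨q, hq.symm⟩
    rw [← hb3] at this; exact this
  have hbq0 : ∀ x : A, b * (q * x) = 0 := fun x => by rw [← mul_assoc, hbq, zero_mul]
  have hfix : ∀ x : A, b * x = 0 → q * x = x := by
    intro x hx
    have : x ∈ Rr q := by rw [← hb3]; exact hx
    obtain ⟨y, hy⟩ := this
    rw [hy, ← mul_assoc, hq]
  have hbab : ∀ x : A, b * (a * (b * x)) = b * x := fun x => by
    rw [← mul_assoc, ← mul_assoc, hb1]
  have hba_exp : (b * a) * (1 + b * δa) = b * a + b * δa := by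
    rw [mul_add, mul_one, ← mul_assoc, hb1]
  -- the unit and the second gap condition, in both cases
  have main : IsUnit (1 + b * δa) ∧ (∃ c : ℝ, 0 ≤ c ∧ c * ‖1 - a * b‖ < 1 ∧
      ∀ x ∈ Rr (a + δa), Metric.infDist x (Rr a) ≤ c * ‖x‖) := by
    rcases hyp with ⟨⟨c1, hc10, hc11, hg1⟩, gap2, himg⟩ | ⟨hu, gap2⟩
    swap
    · exact ⟨hu, gap2⟩
    refine ⟨?_, gap2⟩
    have himg' : ∀ m : A, ∃ z : A, (a + δa) * (b * z) = m - q * m := by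
      intro m
      have hmem : m - q * m ∈ Kr q := by
        show q * (m - q * m) = 0
        rw [mul_sub, ← mul_assoc, hq, sub_self]
      rw [← himg] at hmem
      obtain ⟨y, hy, hym⟩ := hmem
      rw [← hb2] at hy
      obtain ⟨z, hz⟩ := hy
      exact ⟨z, by rw [← hz]; exact hym⟩
    have hmem_img : ∀ z : A, q * ((a + δa) * (b * z)) = 0 := by
      intro z
      have : (a + δa) * (b * z) ∈ Kr q := by
        rw [← himg]
        exact ⟨b * z, by rw [← hb2]; exact ⟨z, rfl⟩, rfl⟩
      exact this
    -- surjectivity of left multiplication by 1 + b*δa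
    have hsurj : ∀ v : A, ∃ x : A, (1 + b * δa) * x = v := by
      intro v
      obtain ⟨z, hz⟩ := himg' (a * v - δa * (v - b * (a * v)))
      refine ⟨(v - b * (a * v)) + b * z, ?_⟩
      have h1 : b * ((a + δa) * (b * z)) = b * z + b * (δa * (b * z)) := by
        rw [add_mul, mul_add, hbab]
      have h2 : b * ((a + δa) * (b * z))
          = b * (a * v) - b * (δa * (v - b * (a * v))) := by
        rw [hz, mul_sub, hbq0, sub_zero, mul_sub]
      have key : b * z + b * (δa * (b * z))
          = b * (a * v) - b * (δa * (v - b * (a * v))) := h1.symm.trans h2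
      have expand : (1 + b * δa) * ((v - b * (a * v)) + b * z)
          = (v - b * (a * v)) + b * (δa * (v - b * (a * v)))
            + (b * z + b * (δa * (b * z))) := by noncomm_ring
      rw [expand, key]; noncomm_ring
    -- injectivity of left multiplication by 1 + b*δa
    have hinj : ∀ x : A, (1 + b * δa) * x = 0 → x = 0 := by
      intro x hx
      rw [add_mul, one_mul, mul_assoc] at hx
      have hxeq : x = b * (-(δa * x)) := by
        rw [mul_neg]; exact eq_neg_of_add_eq_zero_left hx
      have hbax : b * (a * x) = x := by
        have h := hbab (-(δa * x))
        rw [← hxeq] at h; exact h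
      have hkernel : b * ((a + δa) * x) = 0 := by
        rw [add_mul, mul_add, hbax]; exact hx
      have hqa : q * ((a + δa) * x) = 0 := by
        have h := hmem_img (-(δa * x))
        rw [← hxeq] at h; exact h
      have hax : (a + δa) * x = 0 := by
        have h := hfix _ hkernel
        rw [hqa] at h; exact h.symm
      refine aux_gap_zero x (Kr a) ⟨0, mul_zero a⟩ ‖b * a‖ c1 hc11 (hg1 x hax) ?_
      intro z hz
      have haz : a * z = 0 := hz
      have h3 : (b * a) * (x - z) = x := by
        rw [mul_sub, mul_assoc, mul_assoc, haz, mul_zero, sub_zero, hbax]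
      calc ‖x‖ = ‖(b * a) * (x - z)‖ := by rw [h3]
        _ ≤ ‖b * a‖ * ‖x - z‖ := norm_mul_le _ _
        _ = ‖b * a‖ * dist x z := by rw [dist_eq_norm]
    obtain ⟨u, hu⟩ := hsurj 1
    have hus : u * (1 + b * δa) = 1 := by
      have h0 : (1 + b * δa) * (u * (1 + b * δa) - 1) = 0 := by
        rw [mul_sub, ← mul_assoc, hu, one_mul, mul_one, sub_self]
      have := hinj _ h0
      rwa [sub_eq_zero] at this
    exact ⟨⟨1 + b * δa, u, hu, hus⟩, rfl⟩
  obtain ⟨hs, c2, hc20, hc21, hg2⟩ := main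
  have ht : IsUnit (1 + δa * b) := aux_unit_swap hs
  set i := Ring.inverse (1 + δa * b) with hi_def
  set u := Ring.inverse (1 + b * δa) with hu_def
  have hti : (1 + δa * b) * i = 1 := Ring.mul_inverse_cancel _ ht
  have hit : i * (1 + δa * b) = 1 := Ring.inverse_mul_cancel _ ht
  have hsu : (1 + b * δa) * u = 1 := Ring.mul_inverse_cancel _ hs
  have hus : u * (1 + b * δa) = 1 := Ring.inverse_mul_cancel _ hs
  have hw_s : (1 + b * δa) * (b * i) = b := by
    have h1 : (1 + b * δa) * (b * i) = (b * (1 + δa * b)) * i := by noncomm_ring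
    rw [h1, mul_assoc, hti, mul_one]
  have hw_u : b * i = u * b := by
    calc b * i = (u * (1 + b * δa)) * (b * i) := by rw [hus, one_mul]
      _ = u * ((1 + b * δa) * (b * i)) := by rw [mul_assoc]
      _ = u * b := by rw [hw_s]
  have hwa : (b * i) * (a + δa) = u * ((b * a) * (1 + b * δa)) := by
    rw [hw_u, hba_exp]
    noncomm_ring
  -- second conclusion
  have claim2 : (b * i) * (a + δa) * (b * i) = b * i := by
    calc (b * i) * (a + δa) * (b * i)
        = (u * ((b * a) * (1 + b * δa))) * (u * b) := by rw [hwa, hw_u]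
      _ = u * ((b * a) * (((1 + b * δa) * u) * b)) := by noncomm_ring
      _ = u * ((b * a) * b) := by rw [hsu, one_mul]
      _ = u * b := by rw [hb1]
      _ = b * i := hw_u.symm
  -- first conclusion
  have h1ba : (1 - b * a) * (1 + b * δa) = 1 - b * a := by
    have h0 : (1 - b * a) * (b * δa) = 0 := by
      rw [sub_mul, one_mul, ← mul_assoc, hb1, sub_self]
    rw [mul_add, mul_one, h0, add_zero]
  have hr_form : (a + δa) - (a + δa) * (b * i) * (a + δa)
      = (a + δa) * (u * (1 - b * a)) := by
    have e1 : (a + δa) * (b * i) * (a + δa) = (a + δa) * (u * ((b * a) * (1 + b * δa))) := by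
      rw [mul_assoc, hwa]
    have e2 : (a + δa) = (a + δa) * (u * (1 + b * δa)) := by rw [hus, mul_one]
    calc (a + δa) - (a + δa) * (b * i) * (a + δa)
        = (a + δa) * (u * (1 + b * δa)) - (a + δa) * (u * ((b * a) * (1 + b * δa))) := by
          rw [e1, ← e2]
      _ = (a + δa) * (u * ((1 - b * a) * (1 + b * δa))) := by noncomm_ring
      _ = (a + δa) * (u * (1 - b * a)) := by rw [h1ba]
  have hbau : b * ((a + δa) * u) = b * a := by
    have e1 : b * ((a + δa) * u) = ((b * a) * (1 + b * δa)) * u := by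
      rw [hba_exp]; noncomm_ring
    rw [e1, mul_assoc, hsu, mul_one]
  have habr : (a * b) * ((a + δa) - (a + δa) * (b * i) * (a + δa)) = 0 := by
    rw [hr_form]
    have e1 : (a * b) * ((a + δa) * (u * (1 - b * a)))
        = a * ((b * ((a + δa) * u)) * (1 - b * a)) := by noncomm_ring
    rw [e1, hbau]
    have e2 : a * ((b * a) * (1 - b * a)) = (a * b * a) * (1 - b * a) := by noncomm_ring
    rw [e2, hb0, mul_sub, mul_one, ← mul_assoc, hb0, sub_self]
  have claim1 : (a + δa) * (b * i) * (a + δa) = a + δa := by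
    have hr0 : (a + δa) - (a + δa) * (b * i) * (a + δa) = 0 := by
      refine aux_gap_zero _ (Rr a) ⟨a, 1, (mul_one a).symm⟩ ‖1 - a * b‖ c2 hc21
        (hg2 _ ⟨u * (1 - b * a), hr_form⟩) ?_
      intro z hz
      obtain ⟨y, hy⟩ := hz
      have h1 : (a * b) * (a * y) = a * y := by rw [← mul_assoc, hb0]
      have h2 : (1 - a * b) * (((a + δa) - (a + δa) * (b * i) * (a + δa)) - a * y)
          = (a + δa) - (a + δa) * (b * i) * (a + δa) := by
        rw [sub_mul, one_mul, mul_sub, habr, h1, zero_sub, sub_neg_eq_add]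
        abel
      calc ‖(a + δa) - (a + δa) * (b * i) * (a + δa)‖
          = ‖(1 - a * b) * (((a + δa) - (a + δa) * (b * i) * (a + δa)) - a * y)‖ := by rw [h2]
        _ ≤ ‖1 - a * b‖ * ‖((a + δa) - (a + δa) * (b * i) * (a + δa)) - z‖ := by
            rw [hy]; exact norm_mul_le _ _
        _ = ‖1 - a * b‖ * dist ((a + δa) - (a + δa) * (b * i) * (a + δa)) z := by
            rw [dist_eq_norm]
    have := sub_eq_zero.mp hr0
    exact this.symm
  -- third conclusion
  have claim3 : Rr (b * i) = Rr p := by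
    have e : Rr (b * i) = Rr b := by
      ext x
      constructor
      · rintro ⟨z, hz⟩
        exact ⟨i * z, by rw [hz, mul_assoc]⟩
      · rintro ⟨z, hz⟩
        refine ⟨(1 + δa * b) * z, ?_⟩
        rw [hz, mul_assoc, ← mul_assoc i, hit, one_mul]
    exact e.trans hb2
  -- fourth conclusion
  have claim4 : Kr (b * i) = Rr q := by
    have e : Kr (b * i) = Kr b := by
      ext x
      constructor
      · intro hx
        have hx' : (b * i) * x = 0 := hx
        show b * x = 0
        rw [← hw_s, mul_assoc, hx', mul_zero]
      · intro hx
        have hx' : b * x = 0 := hx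
        show (b * i) * x = 0
        rw [hw_u, mul_assoc, hx', mul_zero]
    exact e.trans hb3
  exact ⟨claim1, claim2, claim3, claim4⟩
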